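/- Let G = (V, E) be a finite simple graph with maximum degree at most Δ, and let b ≥ 1 be a natural number. Then there exists an edge coloring col : E → Fin (2b − 1) using at most 2b − 1 colors such that every vertex is incident to at most ⌈Δ/b⌉ edges of each color. -/

import Mathlib

/-!
Colour the edges greedily, one at a time, allowing each vertex at most `c = ⌈Δ/b⌉` edges of
each colour. When an edge `uw` is coloured, each endpoint already carries fewer than
`Δ ≤ b c` coloured edges, so fewer than `b` colours are full there. The two endpoints block at
most `2b - 2` colours, and one of the `2b - 1` colours remains available.
-/

open Finset

namespace Finset

variable {α ι : Type*} [Fintype ι] [DecidableEq ι]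

theorem card_filter_le_card_fiber_mul_le_card (s : Finset α) (f : α → ι) (c : ℕ) :
    #{j | c ≤ #{x ∈ s | f x = j}} * c ≤ #s :=
  calc #{j | c ≤ #{x ∈ s | f x = j}} * c
      = ∑ _j ∈ {j | c ≤ #{x ∈ s | f x = j}}, c := by rw [sum_const, smul_eq_mul]
    _ ≤ ∑ j ∈ {j | c ≤ #{x ∈ s | f x = j}}, #{x ∈ s | f x = j} :=
        sum_le_sum fun j hj => (mem_filter.mp hj).2
    _ ≤ ∑ j, #{x ∈ s | f x = j} := sum_le_sum_of_subset (subset_univ _)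
    _ = #s := (card_eq_sum_card_fiberwise fun x _ => mem_univ (f x)).symm

end Finset

namespace SimpleGraph

variable {V ι : Type*} [DecidableEq V]

/-- The degree of `v` in the subgraph of the edges of `S` that `col` colours `j`. -/
def colorDegree [DecidableEq ι] (S : Finset (Sym2 V)) (col : Sym2 V → ι) (v : V) (j : ι) :
    ℕ :=
  #{e ∈ S | v ∈ e ∧ col e = j}

theorem colorDegree_insert_update [DecidableEq ι] {S : Finset (Sym2 V)} {e : Sym2 V}
    (he : e ∉ S) (col : Sym2 V → ι) (i : ι) (v : V) (j : ι) :
    colorDegree (insert e S) (Function.update col e i) v j =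
      colorDegree S col v j + if v ∈ e ∧ i = j then 1 else 0 := by
  have hS : {e' ∈ S | v ∈ e' ∧ Function.update col e i e' = j} =
      {e' ∈ S | v ∈ e' ∧ col e' = j} :=
    filter_congr fun e' he' => by rw [Function.update_of_ne (ne_of_mem_of_not_mem he' he)]
  unfold colorDegree
  rw [filter_insert, Function.update_self]
  split_ifs with h
  · rw [card_insert_of_notMem fun h' => he (mem_filter.mp h').1, hS]
  · rw [hS, add_zero]

theorem card_full_colors_lt [Fintype ι] [DecidableEq ι] (S : Finset (Sym2 V))
    (col : Sym2 V → ι) {v : V} {b c : ℕ} (hv : #{e ∈ S | v ∈ e} < b * c) :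
    #{j | c ≤ colorDegree S col v j} < b := by
  have h := card_filter_le_card_fiber_mul_le_card {e ∈ S | v ∈ e} col c
  simp only [filter_filter] at h
  by_contra! hb
  exact (hv.trans_le (Nat.mul_le_mul_right c hb)).not_ge h

variable [Fintype V] (G : SimpleGraph V) [DecidableRel G.Adj]

theorem card_filter_mem_lt_degree {S : Finset (Sym2 V)} (hS : S ⊆ G.edgeFinset) {e : Sym2 V}
    (he : e ∈ G.edgeFinset) (heS : e ∉ S) {v : V} (hv : v ∈ e) :
    #{e' ∈ S | v ∈ e'} < G.degree v := by
  rw [← card_incidenceFinset_eq_degree, Nat.lt_iff_add_one_le,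
    ← card_insert_of_notMem fun h => heS (mem_filter.mp h).1]
  refine card_le_card (insert_subset ?_ fun e' he' => ?_)
  · exact (mem_incidenceFinset G v e).mpr ⟨mem_edgeFinset.mp he, hv⟩
  · obtain ⟨he'S, hve'⟩ := mem_filter.mp he'
    exact (mem_incidenceFinset G v e').mpr ⟨mem_edgeFinset.mp (hS he'S), hve'⟩

theorem exists_colorDegree_le_of_subset_edgeFinset [Fintype ι] [DecidableEq ι] {Δ b c : ℕ}
    (hΔ : ∀ v, G.degree v ≤ Δ) (hbc : Δ ≤ b * c) (hι : 2 * (b - 1) < Fintype.card ι)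
    (S : Finset (Sym2 V)) (hS : S ⊆ G.edgeFinset) :
    ∃ col : Sym2 V → ι, ∀ v j, colorDegree S col v j ≤ c := by
  induction S using Finset.induction_on with
  | empty =>
    have : Nonempty ι := Fintype.card_pos_iff.mp (by omega)
    exact ⟨fun _ => Classical.arbitrary ι, fun _ _ => by simp [colorDegree]⟩
  | @insert e S heS ih =>
    obtain ⟨col, hcol⟩ := ih ((subset_insert e S).trans hS)
    have he : e ∈ G.edgeFinset := hS (mem_insert_self e S)
    let full : V → Finset ι := fun v => {j | c ≤ colorDegree S col v j}
    have hfull : ∀ v ∈ e, #(full v) ≤ b - 1 := fun v hv => Nat.le_sub_one_of_lt <|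
      card_full_colors_lt S col <|
        (card_filter_mem_lt_degree G ((subset_insert e S).trans hS) he heS hv).trans_le
          ((hΔ v).trans hbc)
    obtain ⟨i, hi⟩ : ∃ i, ∀ v ∈ e, i ∉ full v := by
      induction e using Sym2.ind with
      | _ u w =>
        obtain ⟨i, -, hi⟩ :=
            exists_mem_notMem_of_card_lt_card (s := full u ∪ full w) (t := univ) <|
          calc #(full u ∪ full w) ≤ #(full u) + #(full w) := card_union_le _ _
            _ < #univ := by
              rw [card_univ]
              have := hfull u (Sym2.mem_mk_left u w)
              have := hfull w (Sym2.mem_mk_right u w)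
              omega
        refine ⟨i, fun v hv => ?_⟩
        rcases Sym2.mem_iff.mp hv with rfl | rfl
        · exact fun h => hi (mem_union_left _ h)
        · exact fun h => hi (mem_union_right _ h)
    refine ⟨Function.update col e i, fun v j => ?_⟩
    rw [colorDegree_insert_update heS]
    split_ifs with h
    · obtain ⟨hv, rfl⟩ := h
      have := hi v hv
      simp only [full, mem_filter, mem_univ, true_and, not_le] at this
      omega
    · exact (add_zero _).trans_le (hcol v j)

end SimpleGraph

/-- Let `G = (V, E)` be a finite simple graph with maximum degree at most `Δ`, and let
`b ≥ 1`. Then there exists an edge coloring `col : E → Fin (2b − 1)` using at most `2b − 1`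
colors such that every vertex is incident to at most `⌈Δ/b⌉` edges of each color. -/
theorem stmt_4 {V : Type*} [Fintype V] (G : SimpleGraph V) [DecidableRel G.Adj]
    (Δ b : ℕ) (hb : 1 ≤ b) (hΔ : ∀ v : V, G.degree v ≤ Δ) :
    ∃ col : G.edgeSet → Fin (2 * b - 1),
      ∀ (v : V) (j : Fin (2 * b - 1)),
        (({e : G.edgeSet | v ∈ (e : Sym2 V) ∧ col e = j}.ncard : ℤ)
          ≤ ⌈(Δ : ℚ) / b⌉) := by
  classical
  set c := ⌈(Δ : ℚ) / b⌉₊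
  have hbc : Δ ≤ b * c := by
    have := Nat.le_ceil ((Δ : ℚ) / b)
    rw [div_le_iff₀ (by positivity)] at this
    rw [mul_comm]
    exact_mod_cast this
  obtain ⟨col, hcol⟩ :=
    G.exists_colorDegree_le_of_subset_edgeFinset (ι := Fin (2 * b - 1)) hΔ hbc
      (by rw [Fintype.card_fin]; omega) G.edgeFinset subset_rfl
  refine ⟨fun e => col e, fun v j => ?_⟩
  have hcard : {e : G.edgeSet | v ∈ (e : Sym2 V) ∧ col e = j}.ncard =
      SimpleGraph.colorDegree G.edgeFinset col v j := by
    rw [SimpleGraph.colorDegree, ← Set.ncard_coe_finset,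
      ← Set.ncard_image_of_injective _ Subtype.val_injective]
    congr 1
    ext e
    simp only [Set.mem_image, Set.mem_ofPred_eq, Subtype.exists, exists_and_right,
      exists_eq_right, coe_filter, SimpleGraph.mem_edgeFinset]
    tauto
  rw [hcard, ← Int.natCast_ceil_eq_ceil (by positivity)]
  exact_mod_cast hcol v j
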